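/- Let σ(m,n) denote the arithmetic-geometric mean and V(D,d) = −1/σ(D,d) for D, d > 0 (mass normalized to 1). Then ∂V/∂D = ((χ − 1)/D)·V(D,d) and ∂V/∂d = −(χ/d)·V(D,d), where χ = Σ_{n=1}^{∞} (1/2ⁿ)·(d_{n−1}/D_n)·Π_{j=1}^{n−1}(1 − d_{j−1}/D_j), with D₀ = D, d₀ = d, D_n = (D_{n−1} + d_{n−1})/2, d_n = √(D_{n−1} d_{n−1}). -/

import Mathlib

open Real Filter

/-- One step of the arithmetic-geometric mean iteration. -/
noncomputable def agmStep (p : ℝ × ℝ) : ℝ × ℝ :=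
  ((p.1 + p.2) / 2, Real.sqrt (p.1 * p.2))

/-- `Dseq D d n = D_n`, the `n`-th arithmetic term of the AGM iteration started at `(D, d)`. -/
noncomputable def Dseq (D d : ℝ) (n : ℕ) : ℝ := (agmStep^[n] (D, d)).1

/-- `dseq D d n = d_n`, the `n`-th geometric term of the AGM iteration started at `(D, d)`. -/
noncomputable def dseq (D d : ℝ) (n : ℕ) : ℝ := (agmStep^[n] (D, d)).2

/-- The arithmetic-geometric mean `σ(D,d)`. -/
noncomputable def agm (D d : ℝ) : ℝ := limUnder atTop (Dseq D d)

/-- The potential `V(D,d) = -1/σ(D,d)` (mass normalized to `1`). -/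
noncomputable def Vagm (D d : ℝ) : ℝ := -1 / agm D d

/-- `χ = Σ_{n≥1} 2⁻ⁿ (d_{n-1}/D_n) Π_{j=1}^{n-1} (1 - d_{j-1}/D_j)`. -/
noncomputable def chi (D d : ℝ) : ℝ :=
  ∑' n : ℕ, (1 / 2 ^ (n + 1)) * (dseq D d n / Dseq D d (n + 1)) *
    ∏ j ∈ Finset.range n, (1 - dseq D d j / Dseq D d (j + 1))

/-!
The iterates `D_n, d_n` depend smoothly on `d`, and an induction shows that `d ∂_d log D_n` is
the `n`-th partial sum `S_n` of the series for `χ`, while `d ∂_d log d_n` exceeds it by the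
product term `chiGap n = O(2⁻ⁿ)`. Since `|D_n - d_n| ≤ |D - d| / 2ⁿ`, the derivatives
`D_n S_n / d` converge locally uniformly, so `∂_d σ = σ χ / d`. Homogeneity
`σ(cD, cd) = c σ(D, d)` turns this into `∂_D σ = σ (1 - χ) / D` (Euler's identity), and
`V = -1/σ` gives the claim.
-/

open Topology Finset

section Sequences

variable {D d : ℝ}

lemma Dseq_succ (D d : ℝ) (n : ℕ) : Dseq D d (n + 1) = (Dseq D d n + dseq D d n) / 2 := by
  simp [Dseq, dseq, Function.iterate_succ_apply', agmStep]

lemma dseq_succ (D d : ℝ) (n : ℕ) : dseq D d (n + 1) = √(Dseq D d n * dseq D d n) := by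
  simp [Dseq, dseq, Function.iterate_succ_apply', agmStep]

lemma Dseq_mem_Icc_and_dseq_mem_Icc (hD : 0 ≤ D) (hd : 0 ≤ d) (n : ℕ) :
    Dseq D d n ∈ Set.Icc (min D d) (max D d) ∧ dseq D d n ∈ Set.Icc (min D d) (max D d) := by
  induction n with
  | zero => simp [Dseq, dseq]
  | succ n ih =>
    obtain ⟨⟨hD₁, hD₂⟩, hd₁, hd₂⟩ := ih
    have hmin : 0 ≤ min D d := le_min hD hd
    refine ⟨⟨?_, ?_⟩, ?_, ?_⟩
    · rw [Dseq_succ]; linarith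
    · rw [Dseq_succ]; linarith
    · rw [dseq_succ, ← Real.sqrt_mul_self hmin]
      exact Real.sqrt_le_sqrt (mul_le_mul hD₁ hd₁ hmin (hmin.trans hD₁))
    · rw [dseq_succ, ← Real.sqrt_mul_self (hmin.trans min_le_max)]
      exact Real.sqrt_le_sqrt (mul_le_mul hD₂ hd₂ (hmin.trans hd₁) (hmin.trans min_le_max))

lemma Dseq_pos (hD : 0 < D) (hd : 0 < d) (n : ℕ) : 0 < Dseq D d n :=
  (lt_min hD hd).trans_le (Dseq_mem_Icc_and_dseq_mem_Icc hD.le hd.le n).1.1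

lemma dseq_pos (hD : 0 < D) (hd : 0 < d) (n : ℕ) : 0 < dseq D d n :=
  (lt_min hD hd).trans_le (Dseq_mem_Icc_and_dseq_mem_Icc hD.le hd.le n).2.1

lemma abs_half_add_sub_sqrt_mul_le {a b : ℝ} (ha : 0 ≤ a) (hb : 0 ≤ b) :
    |(a + b) / 2 - √(a * b)| ≤ |a - b| / 2 := by
  lift a to NNReal using ha
  lift b to NNReal using hb
  simpa [NNReal.dist_eq, abs_sub_comm] using NNReal.dist_gm_am_le (x := a) (y := b)

lemma abs_Dseq_sub_dseq_le (hD : 0 ≤ D) (hd : 0 ≤ d) (n : ℕ) :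
    |Dseq D d n - dseq D d n| ≤ |D - d| / 2 ^ n := by
  induction n with
  | zero => simp [Dseq, dseq]
  | succ n ih =>
    obtain ⟨⟨hD₁, -⟩, hd₁, -⟩ := Dseq_mem_Icc_and_dseq_mem_Icc hD hd n
    have hmin : 0 ≤ min D d := le_min hD hd
    rw [Dseq_succ, dseq_succ, pow_succ, ← div_div]
    exact (abs_half_add_sub_sqrt_mul_le (hmin.trans hD₁) (hmin.trans hd₁)).trans (by gcongr)

lemma dist_Dseq_Dseq_succ_le (hD : 0 ≤ D) (hd : 0 ≤ d) (n : ℕ) :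
    dist (Dseq D d n) (Dseq D d (n + 1)) ≤ |D - d| / 2 / 2 ^ n := by
  rw [Real.dist_eq, Dseq_succ,
    show Dseq D d n - (Dseq D d n + dseq D d n) / 2 = (Dseq D d n - dseq D d n) / 2 by ring,
    abs_div, abs_two, div_right_comm]
  gcongr
  exact abs_Dseq_sub_dseq_le hD hd n

lemma tendsto_Dseq_agm (hD : 0 ≤ D) (hd : 0 ≤ d) : Tendsto (Dseq D d) atTop (𝓝 (agm D d)) :=
  (cauchySeq_of_le_geometric_two (dist_Dseq_Dseq_succ_le hD hd)).tendsto_limUnder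

lemma dist_Dseq_agm_le (hD : 0 ≤ D) (hd : 0 ≤ d) (n : ℕ) :
    dist (Dseq D d n) (agm D d) ≤ |D - d| / 2 ^ n :=
  dist_le_of_le_geometric_two_of_tendsto (dist_Dseq_Dseq_succ_le hD hd) (tendsto_Dseq_agm hD hd) n

lemma agm_pos (hD : 0 < D) (hd : 0 < d) : 0 < agm D d :=
  (lt_min hD hd).trans_le <| ge_of_tendsto' (tendsto_Dseq_agm hD.le hd.le) fun n =>
    (Dseq_mem_Icc_and_dseq_mem_Icc hD.le hd.le n).1.1

lemma Dseq_mul_and_dseq_mul {c : ℝ} (hc : 0 ≤ c) (D d : ℝ) (n : ℕ) :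
    Dseq (c * D) (c * d) n = c * Dseq D d n ∧ dseq (c * D) (c * d) n = c * dseq D d n := by
  induction n with
  | zero => exact ⟨rfl, rfl⟩
  | succ n ih =>
    rw [Dseq_succ, Dseq_succ, dseq_succ, dseq_succ, ih.1, ih.2, mul_mul_mul_comm, ← sq,
      Real.sqrt_mul (sq_nonneg c), Real.sqrt_sq hc]
    exact ⟨by ring, rfl⟩

lemma agm_mul {c : ℝ} (hc : 0 ≤ c) (hD : 0 ≤ D) (hd : 0 ≤ d) :
    agm (c * D) (c * d) = c * agm D d :=
  (((tendsto_Dseq_agm hD hd).const_mul c).congr fun n =>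
    (Dseq_mul_and_dseq_mul hc D d n).1.symm).limUnder_eq

end Sequences

section Series

variable {D d : ℝ}

noncomputable def chiTerm (D d : ℝ) (k : ℕ) : ℝ :=
  (1 / 2 ^ (k + 1)) * (dseq D d k / Dseq D d (k + 1)) *
    ∏ j ∈ range k, (1 - dseq D d j / Dseq D d (j + 1))

/-- `d ∂_d log d_n - d ∂_d log D_n`, by `hasDerivAt_Dseq_and_dseq`. -/
noncomputable def chiGap (D d : ℝ) (n : ℕ) : ℝ :=
  (∏ j ∈ range n, (1 - dseq D d j / Dseq D d (j + 1))) / 2 ^ n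

lemma chiTerm_eq (D d : ℝ) (k : ℕ) :
    chiTerm D d k = chiGap D d k * (dseq D d k / Dseq D d (k + 1)) / 2 := by
  rw [chiTerm, chiGap, pow_succ]
  ring

lemma chiGap_succ (D d : ℝ) (n : ℕ) :
    chiGap D d (n + 1) = chiGap D d n * (1 - dseq D d n / Dseq D d (n + 1)) / 2 := by
  rw [chiGap, chiGap, prod_range_succ, pow_succ]
  ring

lemma dseq_div_Dseq_succ_mem_Icc (hD : 0 ≤ D) (hd : 0 ≤ d) (k : ℕ) :
    dseq D d k / Dseq D d (k + 1) ∈ Set.Icc 0 2 := by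
  obtain ⟨⟨hD₁, -⟩, hd₁, -⟩ := Dseq_mem_Icc_and_dseq_mem_Icc hD hd k
  have hmin : 0 ≤ min D d := le_min hD hd
  refine ⟨div_nonneg (hmin.trans hd₁) ?_, div_le_of_le_mul₀ ?_ zero_le_two ?_⟩ <;>
    · rw [Dseq_succ]; linarith

lemma abs_chiGap_le (hD : 0 ≤ D) (hd : 0 ≤ d) (n : ℕ) : |chiGap D d n| ≤ 1 / 2 ^ n := by
  rw [chiGap, abs_div, abs_prod, abs_of_pos (pow_pos two_pos n)]
  gcongr
  refine prod_le_one (fun _ _ => abs_nonneg _) fun j _ => ?_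
  obtain ⟨h₀, h₂⟩ := dseq_div_Dseq_succ_mem_Icc hD hd j
  exact abs_le.2 ⟨by linarith, by linarith⟩

lemma abs_chiTerm_le (hD : 0 ≤ D) (hd : 0 ≤ d) (k : ℕ) :
    |chiTerm D d k| ≤ 2 / 2 / 2 ^ k := by
  obtain ⟨h₀, h₂⟩ := dseq_div_Dseq_succ_mem_Icc hD hd k
  rw [chiTerm_eq, abs_div, abs_mul, abs_of_nonneg h₀, abs_two]
  calc |chiGap D d k| * (dseq D d k / Dseq D d (k + 1)) / 2 ≤ 1 / 2 ^ k * 2 / 2 := by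
        gcongr; exact abs_chiGap_le hD hd k
    _ = 2 / 2 / 2 ^ k := by ring

lemma tendsto_sum_chiTerm_chi (hD : 0 ≤ D) (hd : 0 ≤ d) :
    Tendsto (fun n => ∑ k ∈ range n, chiTerm D d k) atTop (𝓝 (chi D d)) :=
  (Summable.of_norm_bounded (summable_geometric_two' 2)
    (abs_chiTerm_le hD hd)).hasSum.tendsto_sum_nat

lemma abs_chi_sub_sum_le (hD : 0 ≤ D) (hd : 0 ≤ d) (n : ℕ) :
    |chi D d - ∑ k ∈ range n, chiTerm D d k| ≤ 2 / 2 ^ n := by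
  rw [abs_sub_comm, ← Real.dist_eq]
  refine dist_le_of_le_geometric_two_of_tendsto (fun k => ?_) (tendsto_sum_chiTerm_chi hD hd) n
  rw [dist_comm, Real.dist_eq, sum_range_succ, add_sub_cancel_left]
  exact abs_chiTerm_le hD hd k

lemma abs_chi_le (hD : 0 ≤ D) (hd : 0 ≤ d) : |chi D d| ≤ 2 := by
  simpa using abs_chi_sub_sum_le hD hd 0

end Series

lemma tendstoUniformlyOn_of_forall_dist_le {ι α β : Type*} [PseudoMetricSpace β] {p : Filter ι}
    {F : ι → α → β} {f : α → β} {s : Set α} {u : ι → ℝ} (hu : Tendsto u p (𝓝 0))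
    (h : ∀ n, ∀ x ∈ s, dist (f x) (F n x) ≤ u n) : TendstoUniformlyOn F f p s :=
  Metric.tendstoUniformlyOn_iff.2 fun _ hε =>
    (hu.eventually (gt_mem_nhds hε)).mono fun n hn x hx => (h n x hx).trans_lt hn

/-- Euler's identity `D ∂_D f + d ∂_d f = f` for `f` homogeneous of degree one. -/
theorem hasDerivAt_left_of_homogeneous {f : ℝ → ℝ → ℝ} {D d f₂ : ℝ} (hD : 0 < D)
    (hd : 0 < d) (hf : ∀ c > 0, ∀ y > 0, f (c * D) (c * y) = c * f D y)
    (h₂ : HasDerivAt (f D) f₂ d) :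
    HasDerivAt (fun x => f x d) ((f D d - d * f₂) / D) D := by
  have hscale : (fun x => f x d) =ᶠ[𝓝 D] fun x => x / D * f D (d * D / x) := by
    filter_upwards [eventually_gt_nhds hD] with x hx
    have := hf (x / D) (by positivity) (d * D / x) (by positivity)
    rwa [div_mul_cancel₀ _ hD.ne', div_mul_div_comm, mul_comm x, mul_div_mul_right _ _ hx.ne',
      mul_div_cancel_right₀ _ hD.ne'] at this
  have hinner : HasDerivAt (fun x => d * D / x) (-(d * D) / D ^ 2) D := by
    simpa [div_eq_mul_inv, neg_div] using (hasDerivAt_inv hD.ne').const_mul (d * D)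
  have h₂' : HasDerivAt (f D) f₂ (d * D / D) := by rwa [mul_div_cancel_right₀ _ hD.ne']
  refine ((((hasDerivAt_id D).div_const D).mul (h₂'.comp D hinner)).congr_of_eventuallyEq
    hscale).congr_deriv ?_
  simp only [Function.comp_apply, id, mul_div_cancel_right₀ _ hD.ne']
  field_simp
  ring

section Derivatives

variable {D d : ℝ}

lemma hasDerivAt_Dseq_and_dseq (hD : 0 < D) {x : ℝ} (hx : 0 < x) (n : ℕ) :
    HasDerivAt (fun y => Dseq D y n) (Dseq D x n * (∑ k ∈ range n, chiTerm D x k) / x) x ∧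
    HasDerivAt (fun y => dseq D y n)
      (dseq D x n * (∑ k ∈ range n, chiTerm D x k + chiGap D x n) / x) x := by
  induction n with
  | zero =>
    simp only [Dseq, dseq, Function.iterate_zero_apply, range_zero, sum_empty, chiGap]
    exact ⟨by simpa using hasDerivAt_const x D, by simpa [hx.ne'] using hasDerivAt_id' x⟩
  | succ n ih =>
    obtain ⟨hA, hB⟩ := ih
    have hDn := Dseq_pos hD hx n
    have hdn := dseq_pos hD hx n
    have hD₁ := Dseq_pos hD hx (n + 1)
    have hd₁ := dseq_pos hD hx (n + 1)
    have hsq : dseq D x (n + 1) ^ 2 = Dseq D x n * dseq D x n := by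
      rw [dseq_succ, sq_sqrt (by positivity)]
    rw [sum_range_succ, chiTerm_eq]
    constructor
    · have h := (hA.add hB).div_const 2
      simp only [Pi.add_apply, ← Dseq_succ] at h
      refine h.congr_deriv ?_
      field_simp
      rw [Dseq_succ]
      ring
    · have h := (hA.mul hB).sqrt (mul_pos hDn hdn).ne'
      simp only [Pi.mul_apply, ← dseq_succ] at h
      refine h.congr_deriv ?_
      rw [chiGap_succ]
      field_simp
      linear_combination
        -(chiGap D x n + 2 * ∑ k ∈ range n, chiTerm D x k) * Dseq D x (n + 1) * hsq

lemma abs_agm_mul_chi_sub_le (hD : 0 ≤ D) (hd : 0 ≤ d) (n : ℕ) :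
    |agm D d * chi D d - Dseq D d n * ∑ k ∈ range n, chiTerm D d k| ≤
      4 * max D d / 2 ^ n := by
  have hagm : |agm D d - Dseq D d n| ≤ max D d / 2 ^ n := by
    rw [abs_sub_comm, ← Real.dist_eq]
    refine (dist_Dseq_agm_le hD hd n).trans ?_
    gcongr
    exact abs_sub_le_iff.2 ⟨by linarith [le_max_left D d], by linarith [le_max_right D d]⟩
  have hDseq : |Dseq D d n| ≤ max D d := by
    obtain ⟨⟨hD₁, hD₂⟩, -⟩ := Dseq_mem_Icc_and_dseq_mem_Icc hD hd n
    exact abs_le.2 ⟨by linarith [le_min hD hd], hD₂⟩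
  calc |agm D d * chi D d - Dseq D d n * ∑ k ∈ range n, chiTerm D d k|
      = |(agm D d - Dseq D d n) * chi D d
          + Dseq D d n * (chi D d - ∑ k ∈ range n, chiTerm D d k)| := by ring_nf
    _ ≤ |agm D d - Dseq D d n| * |chi D d|
          + |Dseq D d n| * |chi D d - ∑ k ∈ range n, chiTerm D d k| := by
        rw [← abs_mul, ← abs_mul]
        exact abs_add_le _ _
    _ ≤ max D d / 2 ^ n * 2 + max D d * (2 / 2 ^ n) := by
        gcongr
        exacts [abs_chi_le hD hd, abs_chi_sub_sum_le hD hd n]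
    _ = 4 * max D d / 2 ^ n := by ring

theorem hasDerivAt_agm_right (hD : 0 < D) (hd : 0 < d) :
    HasDerivAt (agm D) (agm D d * chi D d / d) d := by
  set s := Set.Ioo (d / 2) (2 * d)
  have hs : ∀ x ∈ s, 0 < x := fun x hx => (half_pos hd).trans hx.1
  have hunif : TendstoUniformlyOn (fun n x => Dseq D x n * (∑ k ∈ range n, chiTerm D x k) / x)
      (fun x => agm D x * chi D x / x) atTop s := by
    refine tendstoUniformlyOn_of_forall_dist_le (u := fun n => 8 * max D (2 * d) / d * (1 / 2) ^ n)
      (by simpa using (tendsto_pow_atTop_nhds_zero_of_lt_one (r := (1 / 2 : ℝ)) (by norm_num)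
        (by norm_num)).const_mul (8 * max D (2 * d) / d)) fun n x hx => ?_
    rw [Real.dist_eq, ← sub_div, abs_div, abs_of_pos (hs x hx)]
    calc |agm D x * chi D x - Dseq D x n * ∑ k ∈ range n, chiTerm D x k| / x
        ≤ 4 * max D x / 2 ^ n / x :=
          div_le_div_of_nonneg_right (abs_agm_mul_chi_sub_le hD.le (hs x hx).le n) (hs x hx).le
      _ ≤ 4 * max D (2 * d) / 2 ^ n / (d / 2) := by
          gcongr
          exacts [hx.2.le, hx.1.le]
      _ = 8 * max D (2 * d) / d * (1 / 2) ^ n := by rw [one_div_pow]; ring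
  exact hasDerivAt_of_tendstoUniformlyOn (g' := fun x => agm D x * chi D x / x) isOpen_Ioo hunif
    (Eventually.of_forall fun n x hx => (hasDerivAt_Dseq_and_dseq hD (hs x hx) n).1)
    (fun x hx => tendsto_Dseq_agm hD.le (hs x hx).le) ⟨by linarith, by linarith⟩

theorem hasDerivAt_agm_left (hD : 0 < D) (hd : 0 < d) :
    HasDerivAt (fun x => agm x d) (agm D d * (1 - chi D d) / D) D := by
  convert hasDerivAt_left_of_homogeneous hD hd (fun c hc y hy => agm_mul hc.le hD.le hy.le)
    (hasDerivAt_agm_right hD hd) using 1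
  field_simp

end Derivatives

theorem partial_derivs_of_V (D d : ℝ) (hD : 0 < D) (hd : 0 < d) :
    HasDerivAt (fun D' => Vagm D' d) ((chi D d - 1) / D * Vagm D d) D ∧
    HasDerivAt (fun d' => Vagm D d') (-(chi D d / d) * Vagm D d) d := by
  have hσ := (agm_pos hD hd).ne'
  constructor
  · refine ((hasDerivAt_const D (-1 : ℝ)).div (hasDerivAt_agm_left hD hd) hσ).congr_deriv ?_
    rw [Vagm]
    field_simp
    ring
  · refine ((hasDerivAt_const d (-1 : ℝ)).div (hasDerivAt_agm_right hD hd) hσ).congr_deriv ?_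
    rw [Vagm]
    field_simp
    ring
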